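/- arXiv:0812.1259 — 5 statements merged into one kernel-verified Lean document; each statement's English description precedes it below -/
import Mathlib

section
/- There exist an odd positive integer M and an integer α such that no integer x with x ≡ α (mod M) can be written in the form x = b₁² + b₂² + 2^{n²} with b₁, b₂, n nonnegative integers. In other words, there is a residue class with odd modulus containing no integer of the form b₁² + b₂² + 2^{n²}. -/
/-!
Take `M = 3² · 7² · 19²`. The multiplicative order of `2` is `6` modulo `3²`, `21` modulo `7²` and
`342` modulo `19²`, so `2^(n²)` modulo `p²` depends only on `n²` modulo that order. The congruence
classes `n ≡ 0 (mod 2)`, `n ≢ 0 (mod 3)` and `n ≡ 3 (mod 6)` cover `ℕ`, and `α` is chosen (by the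
Chinese remainder theorem) so that on these classes `α - 2^(n²)` is divisible by `p` but not by `p²`
for `p = 3`, `7`, `19` respectively. For `x ≡ α (mod M)` the same then holds for
`x - 2^(n²) = b₁² + b₂²`, which is impossible: a prime `p ≡ 3 (mod 4)` dividing `b₁² + b₂²`
divides both `b₁` and `b₂`.
-/

theorem Int.prime_dvd_of_dvd_sq_add_sq {p : ℕ} [Fact p.Prime] (hp : p % 4 = 3) {a b : ℤ}
    (h : (p : ℤ) ∣ a ^ 2 + b ^ 2) : (p : ℤ) ∣ b := by
  by_contra hb
  have hb' : (b : ZMod p) ≠ 0 := by rwa [Ne, ZMod.intCast_zmod_eq_zero_iff_dvd]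
  have hab : (a : ZMod p) ^ 2 = -(b : ZMod p) ^ 2 := by
    rw [eq_neg_iff_add_eq_zero]
    exact_mod_cast (ZMod.intCast_zmod_eq_zero_iff_dvd _ p).mpr h
  exact ZMod.mod_four_ne_three_of_sq_eq_neg_sq' hb' hab hp

theorem Int.sq_dvd_sq_add_sq_of_dvd {p : ℕ} [Fact p.Prime] (hp : p % 4 = 3) {a b : ℤ}
    (h : (p : ℤ) ∣ a ^ 2 + b ^ 2) : (p : ℤ) ^ 2 ∣ a ^ 2 + b ^ 2 := by
  obtain ⟨u, rfl⟩ := Int.prime_dvd_of_dvd_sq_add_sq hp (add_comm (a ^ 2) _ ▸ h)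
  obtain ⟨v, rfl⟩ := Int.prime_dvd_of_dvd_sq_add_sq hp h
  exact ⟨u ^ 2 + v ^ 2, by ring⟩

theorem ZMod.eq_zero_of_prime_mul_eq_zero_of_intCast_sq_add_sq {p : ℕ} [Fact p.Prime]
    (hp : p % 4 = 3) {m : ZMod (p ^ 2)} (a b : ℤ) (hm : ((a ^ 2 + b ^ 2 : ℤ) : ZMod (p ^ 2)) = m)
    (hpm : (p : ZMod (p ^ 2)) * m = 0) : m = 0 := by
  have hp0 : (p : ℤ) ≠ 0 := by exact_mod_cast (Fact.out : p.Prime).ne_zero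
  have hdvd : (p : ℤ) * p ∣ p * (a ^ 2 + b ^ 2) := by
    have := (ZMod.intCast_zmod_eq_zero_iff_dvd (p * (a ^ 2 + b ^ 2)) (p ^ 2)).mp
      (by push_cast at hm ⊢; rw [hm, hpm])
    simpa [sq] using this
  rw [← hm, ZMod.intCast_zmod_eq_zero_iff_dvd, Nat.cast_pow]
  exact Int.sq_dvd_sq_add_sq_of_dvd hp ((mul_dvd_mul_iff_left hp0).mp hdvd)

theorem Int.ne_sq_add_sq_add_two_pow_of_modEq {p : ℕ} [Fact p.Prime] (hp : p % 4 = 3)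
    {α x : ℤ} (hx : x ≡ α [ZMOD (p ^ 2 : ℕ)]) {e : ℕ}
    (hpm : (p : ZMod (p ^ 2)) * (α - 2 ^ e) = 0) (hne : (α - 2 ^ e : ZMod (p ^ 2)) ≠ 0)
    (a b : ℤ) : x ≠ a ^ 2 + b ^ 2 + 2 ^ e := by
  intro h
  refine hne (ZMod.eq_zero_of_prime_mul_eq_zero_of_intCast_sq_add_sq hp a b ?_ hpm)
  rw [← (ZMod.intCast_eq_intCast_iff _ _ _).mpr hx, h]
  push_cast
  ring

theorem pow_sq_eq_pow_sq_mod {M : Type*} [Monoid M] {g : M} {D : ℕ} (hD : g ^ D = 1) (n : ℕ) :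
    g ^ (n ^ 2) = g ^ ((n % D) ^ 2 % D) := by
  rw [pow_eq_pow_mod _ hD, Nat.pow_mod]

theorem three_mul_sub_two_pow_sq_of_even (n : ℕ) (hn : n % 2 = 0) :
    (3 : ZMod (3 ^ 2)) * (112954 - 2 ^ (n ^ 2)) = 0 ∧ (112954 - 2 ^ (n ^ 2) : ZMod (3 ^ 2)) ≠ 0 := by
  rw [pow_sq_eq_pow_sq_mod (by decide : (2 : ZMod (3 ^ 2)) ^ 6 = 1)]
  have hlt : n % 6 < 6 := Nat.mod_lt _ (by norm_num)
  have hr : n % 6 % 2 = 0 := by omega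
  generalize n % 6 = r at hlt hr
  revert r
  decide

theorem seven_mul_sub_two_pow_sq_of_not_dvd (n : ℕ) (hn : n % 3 ≠ 0) :
    (7 : ZMod (7 ^ 2)) * (112954 - 2 ^ (n ^ 2)) = 0 ∧ (112954 - 2 ^ (n ^ 2) : ZMod (7 ^ 2)) ≠ 0 := by
  rw [pow_sq_eq_pow_sq_mod (by decide : (2 : ZMod (7 ^ 2)) ^ 21 = 1)]
  have hlt : n % 21 < 21 := Nat.mod_lt _ (by norm_num)
  have hr : n % 21 % 3 ≠ 0 := by omega
  generalize n % 21 = r at hlt hr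
  revert r
  decide

set_option maxRecDepth 4000 in
theorem nineteen_mul_sub_two_pow_sq_of_mod_six (n : ℕ) (hn : n % 6 = 3) :
    (19 : ZMod (19 ^ 2)) * (112954 - 2 ^ (n ^ 2)) = 0 ∧
      (112954 - 2 ^ (n ^ 2) : ZMod (19 ^ 2)) ≠ 0 := by
  rw [pow_sq_eq_pow_sq_mod (by decide : (2 : ZMod (19 ^ 2)) ^ 342 = 1)]
  have hlt : n % 342 < 342 := Nat.mod_lt _ (by norm_num)
  have hr : n % 342 % 6 = 3 := by omega
  generalize n % 342 = r at hlt hr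
  revert r
  decide

/-- There is a residue class with odd modulus containing no integer of the form
`b₁² + b₂² + 2^(n²)` with `b₁, b₂, n` nonnegative integers. -/
theorem exists_odd_residue_class_avoiding_b2_b2_pow2sq :
    ∃ (M : ℕ) (α : ℤ), Odd M ∧ 0 < M ∧
      ∀ x : ℤ, x ≡ α [ZMOD (M : ℤ)] →
        ¬∃ b₁ b₂ n : ℕ, x = (b₁ : ℤ) ^ 2 + (b₂ : ℤ) ^ 2 + 2 ^ (n ^ 2) := by
  refine ⟨3 ^ 2 * 7 ^ 2 * 19 ^ 2, 112954, by decide, by norm_num, ?_⟩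
  rintro x hx ⟨b₁, b₂, n, rfl⟩
  have : Fact (Nat.Prime 7) := ⟨by norm_num⟩
  have : Fact (Nat.Prime 19) := ⟨by norm_num⟩
  have hmod {q : ℕ} (hq : q ∣ 3 ^ 2 * 7 ^ 2 * 19 ^ 2) :
      (b₁ : ℤ) ^ 2 + (b₂ : ℤ) ^ 2 + 2 ^ (n ^ 2) ≡ 112954 [ZMOD (q : ℤ)] :=
    hx.of_dvd (Int.natCast_dvd_natCast.mpr hq)
  by_cases h2 : n % 2 = 0
  · obtain ⟨hpm, hne⟩ := three_mul_sub_two_pow_sq_of_even n h2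
    exact Int.ne_sq_add_sq_add_two_pow_of_modEq (p := 3) rfl (hmod (by norm_num)) hpm hne _ _ rfl
  by_cases h3 : n % 3 = 0
  · obtain ⟨hpm, hne⟩ := nineteen_mul_sub_two_pow_sq_of_mod_six n (by omega)
    exact Int.ne_sq_add_sq_add_two_pow_of_modEq (p := 19) rfl (hmod (by norm_num)) hpm hne _ _ rfl
  · obtain ⟨hpm, hne⟩ := seven_mul_sub_two_pow_sq_of_not_dvd n h3
    exact Int.ne_sq_add_sq_add_two_pow_of_modEq (p := 7) rfl (hmod (by norm_num)) hpm hne _ _ rfl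
end

section
/- There is an absolute constant C > 0 such that for every real N ≥ 2, the sum over all pairs of nonnegative integers (n₁, n₂) with n₁ < n₂ and 2^{n₂} ≤ N of the product ∏_{p prime, p | 2^{n₂−n₁}−1} (1 + 1/p) is at most C·(log N)². -/
/-!
Write `ℓ(m)` for the order of `2` modulo `m`. Since `∏_{p ∣ n} (1 + 1/p)` is the sum of `1/m` over
the squarefree divisors `m` of `n`, and `m ∣ 2^d - 1` iff `ℓ(m) ∣ d`, summing over `d ≤ D` gives
`∑_{d ≤ D} ∏_{p ∣ 2^d - 1} (1 + 1/p) ≤ D ∑_m 1/(m ℓ(m))` over squarefree `m` with `ℓ(m) > 0`.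
A pair `n₁ < n₂` with `2^{n₂} ≤ N` has `d = n₂ - n₁ ≤ D = log₂ N` and at most `D` choices of `n₂`,
so it remains to see that `∑_m 1/(m ℓ(m))` is bounded (Romanoff). Every `m` with `ℓ(m) ≤ x` divides
`∏_{t ≤ x} (2^t - 1)`, which has at most `x²` prime factors. As `π(n) ≤ n/3 + 3`, a set `S` of primes
has `∑_{p ∈ S} 1/p ≤ 3 + log(|S| + 1)/3`, so these `m` have `∑ 1/m ≪ x^{2/3}`; on each block
`8^k ≤ ℓ(m) < 8^{k+1}` this gives `∑ 1/(m ℓ(m)) ≪ 4^k / 8^k`, a geometric series.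
-/

open Finset Real

lemma dvd_mersenne_iff_orderOf_dvd {m d : ℕ} : m ∣ mersenne d ↔ orderOf (2 : ZMod m) ∣ d := by
  rw [orderOf_dvd_iff_pow_eq_one, ← ZMod.natCast_eq_zero_iff, mersenne,
    Nat.cast_sub Nat.one_le_two_pow]
  push_cast
  rw [sub_eq_zero]

lemma Nat.prod_primeFactors_one_add {R : Type*} [CommSemiring R] (f : ℕ → R) {n : ℕ}
    (hn : n ≠ 0) :
    ∏ p ∈ n.primeFactors, (1 + f p) =
      ∑ d ∈ n.divisors with Squarefree d, ∏ p ∈ d.primeFactors, f p := by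
  rw [Nat.sum_divisors_filter_squarefree hn, Finset.prod_one_add, Nat.factors_eq,
    List.toFinset_coe, ← Nat.primeFactors]
  refine sum_congr rfl fun t ht => ?_
  rw [Finset.prod_val, Function.id_def, Nat.primeFactors_prod fun p hp =>
    Nat.prime_of_mem_primeFactors (mem_powerset.1 ht hp)]

lemma Nat.prod_primeFactors_one_add_inv {n : ℕ} (hn : n ≠ 0) :
    ∏ p ∈ n.primeFactors, (1 + (p : ℝ)⁻¹) = ∑ d ∈ n.divisors with Squarefree d, (d : ℝ)⁻¹ := by
  rw [Nat.prod_primeFactors_one_add _ hn]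
  refine sum_congr rfl fun d hd => ?_
  conv_rhs => rw [← Nat.prod_primeFactors_of_squarefree (mem_filter.1 hd).2]
  push_cast
  rw [prod_inv_distrib]

lemma Nat.primeCounting'_le_div_three_add_three (n : ℕ) : Nat.primeCounting' n ≤ n / 3 + 3 := by
  have h7 : Nat.primeCounting' 7 = 3 := by decide
  rcases le_or_gt n 7 with h | h
  · have := Nat.monotone_primeCounting' h
    omega
  · obtain ⟨k, rfl⟩ := Nat.exists_eq_add_of_le h.le
    have := Nat.primeCounting'_add_le (a := 6) (k := 7) (by norm_num) (by norm_num) k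
    rw [h7, show Nat.totient 6 = 2 by decide] at this
    omega

lemma sum_inv_le_harmonic_add_one {T : Finset ℕ} {n : ℕ} (h0 : 0 ∉ T) (hT : #T ≤ n) :
    ∑ i ∈ T, (i : ℝ)⁻¹ ≤ harmonic n + 1 := by
  rw [← sum_filter_add_sum_filter_not T (· ≤ n)]
  gcongr ?_ + ?_
  · calc ∑ i ∈ T with i ≤ n, (i : ℝ)⁻¹ ≤ ∑ i ∈ Icc 1 n, (i : ℝ)⁻¹ := by
          refine sum_le_sum_of_subset_of_nonneg (fun i hi => ?_) fun _ _ _ => by positivity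
          obtain ⟨hiT, hin⟩ := mem_filter.1 hi
          exact mem_Icc.2 ⟨Nat.one_le_iff_ne_zero.2 (ne_of_mem_of_not_mem hiT h0), hin⟩
      _ = harmonic n := by simp [harmonic_eq_sum_Icc]
  · calc ∑ i ∈ T with ¬i ≤ n, (i : ℝ)⁻¹ ≤ ∑ i ∈ T with ¬i ≤ n, ((n : ℝ) + 1)⁻¹ := by
          refine sum_le_sum fun i hi => inv_anti₀ (by positivity) ?_
          exact_mod_cast Nat.succ_le_of_lt (not_le.1 (mem_filter.1 hi).2)
      _ ≤ n * ((n : ℝ) + 1)⁻¹ := by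
          rw [sum_const, nsmul_eq_mul]
          gcongr
          exact_mod_cast (card_filter_le _ _).trans hT
      _ ≤ 1 := by
          rw [← div_eq_mul_inv, div_le_one (by positivity)]
          linarith

lemma sum_inv_primes_le_of_four_le_primeCounting' {S : Finset ℕ} {n : ℕ}
    (hS : ∀ p ∈ S, p.Prime ∧ 4 ≤ Nat.primeCounting' p) (hn : #S ≤ n) :
    ∑ p ∈ S, (p : ℝ)⁻¹ ≤ (harmonic n + 1) / 3 := by
  have hinj : Set.InjOn (Nat.primeCounting' · - 3) S := fun p hp q hq h => by
    have := (hS p hp).2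
    have := (hS q hq).2
    exact Nat.count_injective (hS p hp).1 (hS q hq).1
      (show Nat.primeCounting' p = Nat.primeCounting' q by simp only at h; omega)
  have hindex : ∀ p ∈ S, (p : ℝ)⁻¹ ≤ ((Nat.primeCounting' p - 3 : ℕ) : ℝ)⁻¹ / 3 := by
    intro p hp
    have := (hS p hp).2
    have := Nat.primeCounting'_le_div_three_add_three p
    have hpos : 0 < Nat.primeCounting' p - 3 := by omega
    rw [div_eq_mul_inv, ← mul_inv]
    exact inv_anti₀ (by positivity) (by exact_mod_cast (by omega : (Nat.primeCounting' p - 3) * 3 ≤ p))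
  calc ∑ p ∈ S, (p : ℝ)⁻¹ ≤ ∑ p ∈ S, ((Nat.primeCounting' p - 3 : ℕ) : ℝ)⁻¹ / 3 :=
        sum_le_sum hindex
    _ = (∑ i ∈ S.image (Nat.primeCounting' · - 3), (i : ℝ)⁻¹) / 3 := by
        rw [sum_image hinj, sum_div]
    _ ≤ (harmonic n + 1) / 3 := by
        gcongr
        refine sum_inv_le_harmonic_add_one ?_ (card_image_le.trans hn)
        simp only [mem_image, not_exists, not_and]
        intro p hp
        have := (hS p hp).2
        omega

lemma sum_inv_primes_le {S : Finset ℕ} (hS : ∀ p ∈ S, p.Prime) :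
    ∑ p ∈ S, (p : ℝ)⁻¹ ≤ 3 + log (#S + 1) / 3 := by
  rw [← sum_filter_add_sum_filter_not S (4 ≤ Nat.primeCounting' ·)]
  have large := sum_inv_primes_le_of_four_le_primeCounting' (S := {p ∈ S | 4 ≤ Nat.primeCounting' p})
    (fun p hp => ⟨hS p (mem_filter.1 hp).1, (mem_filter.1 hp).2⟩)
    ((card_filter_le _ _).trans (Nat.le_succ #S))
  have hcard : #{p ∈ S | ¬4 ≤ Nat.primeCounting' p} ≤ 4 := by
    simpa using card_le_card_of_injOn Nat.primeCounting' (t := range 4)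
      (fun p hp => mem_range.2 (not_le.1 (mem_filter.1 hp).2))
      fun p hp q hq => Nat.count_injective (hS p (mem_filter.1 hp).1) (hS q (mem_filter.1 hq).1)
  have small : ∑ p ∈ S with ¬4 ≤ Nat.primeCounting' p, (p : ℝ)⁻¹ ≤ 4 * 2⁻¹ := by
    refine sum_le_card_nsmul _ _ _ (fun p hp => inv_anti₀ two_pos ?_) |>.trans ?_
    · exact_mod_cast (hS p (mem_filter.1 hp).1).two_le
    · rw [nsmul_eq_mul]
      gcongr
      exact_mod_cast hcard
  have := harmonic_le_one_add_log (#S + 1)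
  push_cast at this
  linarith

lemma prod_one_add_inv_primes_pow_three_le {S : Finset ℕ} (hS : ∀ p ∈ S, p.Prime) :
    (∏ p ∈ S, (1 + (p : ℝ)⁻¹)) ^ 3 ≤ exp 9 * (#S + 1) :=
  calc (∏ p ∈ S, (1 + (p : ℝ)⁻¹)) ^ 3 ≤ exp (∑ p ∈ S, (p : ℝ)⁻¹) ^ 3 := by
        gcongr
        exact prod_one_add_le_exp_sum S fun p => by positivity
    _ = exp (3 * ∑ p ∈ S, (p : ℝ)⁻¹) := by rw [← exp_nat_mul]; norm_num
    _ ≤ exp (9 + log (#S + 1)) := exp_le_exp.2 (by linarith [sum_inv_primes_le hS])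
    _ = exp 9 * (#S + 1) := by rw [exp_add, exp_log (by positivity)]

lemma sum_inv_squarefree_dvd_pow_three_le {W : Finset ℕ} {M : ℕ} (hM : M ≠ 0)
    (hW : ∀ m ∈ W, Squarefree m ∧ m ∣ M) :
    (∑ m ∈ W, (m : ℝ)⁻¹) ^ 3 ≤ exp 9 * (#M.primeFactors + 1) := by
  have hsub : W ⊆ {d ∈ M.divisors | Squarefree d} := fun m hm =>
    mem_filter.2 ⟨Nat.mem_divisors.2 ⟨(hW m hm).2, hM⟩, (hW m hm).1⟩
  calc (∑ m ∈ W, (m : ℝ)⁻¹) ^ 3 ≤ (∑ d ∈ M.divisors with Squarefree d, (d : ℝ)⁻¹) ^ 3 := by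
        gcongr
    _ ≤ exp 9 * (#M.primeFactors + 1) := by
        rw [← Nat.prod_primeFactors_one_add_inv hM]
        exact prod_one_add_inv_primes_pow_three_le fun _ => Nat.prime_of_mem_primeFactors

lemma Nat.two_pow_card_primeFactors_le {n : ℕ} (hn : n ≠ 0) : 2 ^ #n.primeFactors ≤ n :=
  (pow_card_le_prod _ _ _ fun _ hp => (Nat.prime_of_mem_primeFactors hp).two_le).trans
    (Nat.le_of_dvd (Nat.pos_of_ne_zero hn) (Nat.prod_primeFactors_dvd n))

lemma prod_mersenne_le (x : ℕ) : ∏ t ∈ Icc 1 x, mersenne t ≤ 2 ^ x ^ 2 :=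
  calc ∏ t ∈ Icc 1 x, mersenne t ≤ ∏ t ∈ Icc 1 x, 2 ^ t :=
        prod_le_prod' fun t _ => Nat.sub_le _ _
    _ = 2 ^ ∑ t ∈ Icc 1 x, t := prod_pow_eq_pow_sum _ _ _
    _ ≤ 2 ^ x ^ 2 := by
        gcongr
        · norm_num
        · calc ∑ t ∈ Icc 1 x, t ≤ ∑ _t ∈ Icc 1 x, x := sum_le_sum fun t ht => (mem_Icc.1 ht).2
            _ = x ^ 2 := by simp [sq]

lemma sum_inv_pow_three_le_of_orderOf_le {W : Finset ℕ} (x : ℕ)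
    (hW : ∀ m ∈ W, Squarefree m ∧ 0 < orderOf (2 : ZMod m) ∧ orderOf (2 : ZMod m) ≤ x) :
    (∑ m ∈ W, (m : ℝ)⁻¹) ^ 3 ≤ exp 9 * (x ^ 2 + 1) := by
  have hM : ∏ t ∈ Icc 1 x, mersenne t ≠ 0 :=
    prod_ne_zero_iff.2 fun t ht => (mersenne_pos.2 (mem_Icc.1 ht).1).ne'
  have hdvd : ∀ m ∈ W, m ∣ ∏ t ∈ Icc 1 x, mersenne t := fun m hm =>
    (dvd_mersenne_iff_orderOf_dvd.2 dvd_rfl).trans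
      (dvd_prod_of_mem _ (mem_Icc.2 ⟨(hW m hm).2.1, (hW m hm).2.2⟩))
  have hcard : #(∏ t ∈ Icc 1 x, mersenne t).primeFactors ≤ x ^ 2 :=
    (Nat.pow_le_pow_iff_right one_lt_two).1
      ((Nat.two_pow_card_primeFactors_le hM).trans (prod_mersenne_le x))
  calc (∑ m ∈ W, (m : ℝ)⁻¹) ^ 3
      ≤ exp 9 * (#(∏ t ∈ Icc 1 x, mersenne t).primeFactors + 1) :=
        sum_inv_squarefree_dvd_pow_three_le hM fun m hm => ⟨(hW m hm).1, hdvd m hm⟩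
    _ ≤ exp 9 * (x ^ 2 + 1) := by
        gcongr
        exact_mod_cast hcard

lemma sum_inv_le_of_orderOf_le_eight_pow {W : Finset ℕ} (j : ℕ)
    (hW : ∀ m ∈ W, Squarefree m ∧ 0 < orderOf (2 : ZMod m) ∧ orderOf (2 : ZMod m) ≤ 8 ^ j) :
    ∑ m ∈ W, (m : ℝ)⁻¹ ≤ 2 * exp 3 * 4 ^ j := by
  refine le_of_pow_le_pow_left₀ three_ne_zero (by positivity) ?_
  have h64 : (((8 ^ j : ℕ) : ℝ)) ^ 2 = ((4 : ℝ) ^ j) ^ 3 := by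
    push_cast
    rw [← pow_mul, ← pow_mul, mul_comm j 2, mul_comm j 3, pow_mul, pow_mul]
    norm_num
  have h1 : (1 : ℝ) ≤ ((4 : ℝ) ^ j) ^ 3 := one_le_pow₀ (one_le_pow₀ (by norm_num))
  calc (∑ m ∈ W, (m : ℝ)⁻¹) ^ 3 ≤ exp 9 * (((8 ^ j : ℕ) : ℝ) ^ 2 + 1) :=
        sum_inv_pow_three_le_of_orderOf_le _ hW
    _ ≤ (2 * exp 3 * 4 ^ j) ^ 3 := by
        rw [mul_pow, mul_pow, ← exp_nat_mul, h64]
        norm_num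
        nlinarith [exp_pos 9]

lemma sum_inv_mul_orderOf_le_of_log_eq {W : Finset ℕ} (k : ℕ)
    (hW : ∀ m ∈ W, Squarefree m ∧ 0 < orderOf (2 : ZMod m) ∧
      Nat.log 8 (orderOf (2 : ZMod m)) = k) :
    ∑ m ∈ W, ((m : ℝ) * orderOf (2 : ZMod m))⁻¹ ≤ 8 * exp 3 * (1 / 2) ^ k := by
  have hord : ∀ m ∈ W, 8 ^ k ≤ orderOf (2 : ZMod m) ∧ orderOf (2 : ZMod m) ≤ 8 ^ (k + 1) := by
    intro m hm
    obtain ⟨-, hpos, hlog⟩ := hW m hm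
    exact ⟨hlog ▸ Nat.pow_log_le_self 8 hpos.ne',
      (hlog ▸ Nat.lt_pow_succ_log_self (by norm_num) _).le⟩
  calc ∑ m ∈ W, ((m : ℝ) * orderOf (2 : ZMod m))⁻¹
      ≤ ∑ m ∈ W, (m : ℝ)⁻¹ * ((8 : ℝ) ^ k)⁻¹ := by
        refine sum_le_sum fun m hm => ?_
        rw [mul_inv]
        gcongr
        exact_mod_cast (hord m hm).1
    _ ≤ 2 * exp 3 * 4 ^ (k + 1) * ((8 : ℝ) ^ k)⁻¹ := by
        rw [← sum_mul]
        gcongr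
        exact sum_inv_le_of_orderOf_le_eight_pow (k + 1) fun m hm =>
          ⟨(hW m hm).1, (hW m hm).2.1, (hord m hm).2⟩
    _ = 8 * exp 3 * (1 / 2) ^ k := by
        rw [show (8 : ℝ) ^ k = 4 ^ k * 2 ^ k by rw [← mul_pow]; norm_num, one_div, inv_pow]
        field_simp
        ring

theorem sum_inv_mul_orderOf_le {V : Finset ℕ}
    (hV : ∀ m ∈ V, Squarefree m ∧ 0 < orderOf (2 : ZMod m)) :
    ∑ m ∈ V, ((m : ℝ) * orderOf (2 : ZMod m))⁻¹ ≤ 16 * exp 3 := by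
  let k : ℕ → ℕ := fun m => Nat.log 8 (orderOf (2 : ZMod m))
  rw [← sum_fiberwise_of_maps_to (g := k) (t := range (V.sup k + 1))
    fun m hm => mem_range.2 (Nat.lt_succ_of_le (le_sup hm))]
  calc _ ≤ ∑ j ∈ range (V.sup k + 1), 8 * exp 3 * (1 / 2) ^ j :=
        sum_le_sum fun j _ => sum_inv_mul_orderOf_le_of_log_eq j fun m hm =>
          ⟨(hV m (mem_filter.1 hm).1).1, (hV m (mem_filter.1 hm).1).2, (mem_filter.1 hm).2⟩
    _ ≤ 8 * exp 3 * 2 := by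
        rw [← mul_sum]
        gcongr
        exact sum_geometric_two_le _
    _ = 16 * exp 3 := by ring

lemma sum_prod_primeFactors_mersenne_eq (D : ℕ) :
    ∑ d ∈ Icc 1 D, ∏ p ∈ (mersenne d).primeFactors, (1 + (p : ℝ)⁻¹) =
      ∑ m ∈ range (2 ^ D) with Squarefree m ∧ 0 < orderOf (2 : ZMod m),
        ((D / orderOf (2 : ZMod m) : ℕ) : ℝ) * (m : ℝ)⁻¹ := by
  have hswap : ∀ d m, d ∈ Icc 1 D ∧ m ∈ {m ∈ (mersenne d).divisors | Squarefree m} ↔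
      d ∈ {d ∈ Ioc 0 D | orderOf (2 : ZMod m) ∣ d} ∧
        m ∈ {m ∈ range (2 ^ D) | Squarefree m ∧ 0 < orderOf (2 : ZMod m)} := by
    intro d m
    simp only [mem_filter, mem_Icc, mem_Ioc, mem_range, Nat.mem_divisors,
      dvd_mersenne_iff_orderOf_dvd]
    constructor
    · rintro ⟨⟨hd, hdD⟩, ⟨hdvd, hne⟩, hsq⟩
      have hm : m ≤ mersenne d := Nat.le_of_dvd (Nat.pos_of_ne_zero hne)
        (dvd_mersenne_iff_orderOf_dvd.2 hdvd)
      have := succ_mersenne d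
      have := Nat.pow_le_pow_right two_pos hdD
      exact ⟨⟨⟨hd, hdD⟩, hdvd⟩, by omega, hsq, Nat.pos_of_dvd_of_pos hdvd hd⟩
    · rintro ⟨⟨⟨hd, hdD⟩, hdvd⟩, -, hsq, -⟩
      exact ⟨⟨hd, hdD⟩, ⟨hdvd, (mersenne_pos.2 hd).ne'⟩, hsq⟩
  rw [sum_congr rfl fun d hd =>
    Nat.prod_primeFactors_one_add_inv (mersenne_pos.2 (mem_Icc.1 hd).1).ne', sum_comm' hswap]
  simp only [sum_const, Nat.Ioc_filter_dvd_card_eq_div, nsmul_eq_mul]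

theorem sum_prod_primeFactors_mersenne_le (D : ℕ) :
    ∑ d ∈ Icc 1 D, ∏ p ∈ (mersenne d).primeFactors, (1 + (p : ℝ)⁻¹) ≤ 16 * exp 3 * D := by
  rw [sum_prod_primeFactors_mersenne_eq]
  calc _ ≤ ∑ m ∈ range (2 ^ D) with Squarefree m ∧ 0 < orderOf (2 : ZMod m),
          D * ((m : ℝ) * orderOf (2 : ZMod m))⁻¹ := by
        refine sum_le_sum fun m _ => ?_
        calc ((D / orderOf (2 : ZMod m) : ℕ) : ℝ) * (m : ℝ)⁻¹
            ≤ (D / orderOf (2 : ZMod m) : ℝ) * (m : ℝ)⁻¹ := by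
              gcongr
              exact Nat.cast_div_le
          _ = D * ((m : ℝ) * orderOf (2 : ZMod m))⁻¹ := by ring
    _ ≤ D * (16 * exp 3) := by
        rw [← mul_sum]
        gcongr
        exact sum_inv_mul_orderOf_le fun m hm => (mem_filter.1 hm).2
    _ = 16 * exp 3 * D := by ring

lemma sum_sub_le_nsmul_sum_Icc {M : Type*} [AddCommMonoid M] [PartialOrder M]
    [IsOrderedAddMonoid M] {F : Finset (ℕ × ℕ)} {D : ℕ} (hF : ∀ q ∈ F, q.1 < q.2 ∧ q.2 ≤ D)
    {f : ℕ → M} (hf : ∀ d, 0 ≤ f d) :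
    ∑ q ∈ F, f (q.2 - q.1) ≤ D • ∑ d ∈ Icc 1 D, f d := by
  have hinj : Set.InjOn (fun q : ℕ × ℕ => (q.2 - q.1, q.2)) F := by
    intro q hq q' hq' h
    simp only [Prod.mk.injEq] at h
    have := (hF q hq).1
    have := (hF q' hq').1
    ext <;> omega
  calc ∑ q ∈ F, f (q.2 - q.1) = ∑ r ∈ F.image (fun q => (q.2 - q.1, q.2)), f r.1 :=
        (sum_image (f := fun r : ℕ × ℕ => f r.1) hinj).symm
    _ ≤ ∑ r ∈ Icc 1 D ×ˢ Icc 1 D, f r.1 := by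
        refine sum_le_sum_of_subset_of_nonneg (image_subset_iff.2 fun q hq => ?_)
          fun _ _ _ => hf _
        have := hF q hq
        simp only [mem_product, mem_Icc]
        omega
    _ = D • ∑ d ∈ Icc 1 D, f d := by
        rw [sum_product, ← sum_nsmul]
        simp

/-- Romanoff-type bound: `∑_{n₁ < n₂, 2^{n₂} ≤ N} ∏_{p | 2^{n₂−n₁}−1} (1 + 1/p) ≪ (log N)²`. -/
theorem romanoff_sum_bound :
    ∃ C : ℝ, 0 < C ∧ ∀ N : ℝ, 2 ≤ N →
      ∑ q ∈ (Finset.range (⌊N⌋₊ + 1) ×ˢ Finset.range (⌊N⌋₊ + 1)).filter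
          (fun q => q.1 < q.2 ∧ (2 : ℝ) ^ q.2 ≤ N),
        ∏ p ∈ ((2 ^ (q.2 - q.1) - 1 : ℕ)).primeFactors, (1 + 1 / (p : ℝ))
        ≤ C * (Real.log N) ^ 2 := by
  refine ⟨16 * exp 3 / log 2 ^ 2, by positivity, fun N hN => ?_⟩
  set D := ⌊logb 2 N⌋₊
  have hD : (D : ℝ) ≤ logb 2 N := Nat.floor_le (logb_nonneg one_lt_two (by linarith))
  calc _ ≤ D • ∑ d ∈ Icc 1 D, ∏ p ∈ (mersenne d).primeFactors, (1 + (p : ℝ)⁻¹) := by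
        simp only [one_div]
        refine sum_sub_le_nsmul_sum_Icc (fun q hq => ?_)
          (f := fun d => ∏ p ∈ (mersenne d).primeFactors, (1 + (p : ℝ)⁻¹))
          fun d => prod_nonneg fun p _ => by positivity
        obtain ⟨-, hlt, hle⟩ := mem_filter.1 hq
        refine ⟨hlt, Nat.le_floor ?_⟩
        rwa [le_logb_iff_rpow_le one_lt_two (by linarith), rpow_natCast]
    _ ≤ D * (16 * exp 3 * D) := by
        rw [nsmul_eq_mul]
        gcongr
        exact sum_prod_primeFactors_mersenne_le D
    _ ≤ 16 * exp 3 * logb 2 N ^ 2 := by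
        rw [mul_left_comm, ← sq]
        gcongr
    _ = 16 * exp 3 / log 2 ^ 2 * log N ^ 2 := by
        rw [logb, div_pow]
        ring
end

section
/- There exists a positive integer m such that the set {x ∈ ℕ : x is even and x is not of the form b₁² + b₂² + 2^{mn} with b₁, b₂, n nonnegative integers} contains an infinite arithmetic progression; that is, there exist integers a and d with d ≥ 1 such that for every nonnegative integer k, the number a + kd is even and is not of the form b₁² + b₂² + 2^{mn} with b₁, b₂, n ∈ ℕ. -/
/-- There is a positive integer `m` such that the even numbers not of the form
`b₁² + b₂² + 2^{mn}` contain an infinite arithmetic progression. -/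
theorem exists_m_even_avoiding_two_squares_pow_arith_progression :
    ∃ m : ℕ, 0 < m ∧ ∃ a d : ℤ, 1 ≤ d ∧ ∀ k : ℕ,
      Even (a + k * d) ∧
      ¬∃ b₁ b₂ n : ℕ, a + k * d = (b₁ : ℤ) ^ 2 + (b₂ : ℤ) ^ 2 + 2 ^ (m * n) := by
  refine ⟨6, by norm_num, 4, 18, by norm_num, fun k => ⟨⟨2 + k * 9, by ring⟩, ?_⟩⟩
  rintro ⟨b₁, b₂, n, h⟩
  have h9 : ((4 + (k : ℤ) * 18 : ℤ) : ZMod 9)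
      = ((b₁ : ℤ) ^ 2 + (b₂ : ℤ) ^ 2 + 2 ^ (6 * n) : ℤ) := by exact congrArg (Int.cast : ℤ → ZMod 9) h
  push_cast at h9
  have h2 : (2 : ZMod 9) ^ (6 * n) = 1 := by
    rw [pow_mul]
    have : ((2:ZMod 9)^6) = 1 := by decide
    rw [this, one_pow]
  have h18 : ((18 : ZMod 9)) = 0 := by decide
  rw [h2, h18, mul_zero, add_zero] at h9
  have key : ∀ x y : ZMod 9, (4 : ZMod 9) ≠ x ^ 2 + y ^ 2 + 1 := by decide
  exact key _ _ h9
end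

section
/- Let p be an odd prime, let β ≥ 1 be an integer, and let a be an integer with 1 ≤ a ≤ p^β. Then the number of integers x with 1 ≤ x ≤ p^β and x² ≡ a (mod p^β) is at most 2·p^{ν_p(a)/2}, where ν_p(a) is the largest integer ν such that p^ν divides a. -/
/-!
Let `ν = v_p(a)`. If `p ^ β ∣ a`, every root is divisible by `p ^ ⌈β/2⌉`, and `[1, p ^ β]`
contains only `p ^ ⌊β/2⌋` such numbers. Otherwise `x² ≡ a` forces `2 v_p(x) = ν` for every
root `x`; with `k = ν / 2` and a fixed root `x₀`, the factorisation
`x² - x₀² = (x - x₀)(x + x₀)` and `p ∤ 2` give `x ≡ ±x₀ (mod p ^ (β - k))`, and each of these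
two residue classes has at most `p ^ k` representatives in `[1, p ^ β]`.
-/

open Set

lemma ncard_Icc_intModEq_le {m c N : ℕ} (hm : 0 < m) (hN : N ≤ m * c) (r : ℤ) :
    {x : ℕ | 1 ≤ x ∧ x ≤ N ∧ (x : ℤ) ≡ r [ZMOD m]}.ncard ≤ c := by
  calc _ ≤ (Iio c).ncard := by
        refine ncard_le_ncard_of_injOn (fun x => (x - 1) / m) ?_ ?_ (finite_Iio c)
        · rintro x ⟨hx1, hxN, -⟩
          rw [mem_Iio, Nat.div_lt_iff_lt_mul hm, mul_comm]
          omega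
        · rintro x ⟨hx1, -, hxr⟩ y ⟨hy1, -, hyr⟩ hxy
          have hdvd : (m : ℤ) ∣ y - x := Int.modEq_iff_dvd.mp (hxr.trans hyr.symm)
          have hx := Nat.div_add_mod (x - 1) m
          have hy := Nat.div_add_mod (y - 1) m
          have hxm := Nat.mod_lt (x - 1) hm
          have hym := Nat.mod_lt (y - 1) hm
          simp only at hxy
          rw [hxy] at hx
          have habs : |(y : ℤ) - x| < m := by rw [abs_lt]; omega
          have := Int.eq_zero_of_abs_lt_dvd hdvd habs
          omega
    _ = c := by rw [← Finset.coe_Iio, ncard_coe_finset, Nat.card_Iio]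

section Domain

variable {R : Type*} [CommRing R] [IsDomain R] {p x y : R}

lemma pow_dvd_sub_or_pow_dvd_add_of_pow_dvd_sq_sub_sq {n : ℕ} (hp : Prime p) (hp2 : ¬p ∣ 2)
    (hy : ¬p ∣ y) (h : p ^ n ∣ x ^ 2 - y ^ 2) : p ^ n ∣ x - y ∨ p ^ n ∣ x + y := by
  rw [sq_sub_sq] at h
  by_cases hsub : p ∣ x - y
  · refine .inl (hp.pow_dvd_of_dvd_mul_left n (fun hadd => ?_) h)
    -- `p` would divide `(x + y) - (x - y) = 2 * y`
    have h2y : p ∣ 2 * y := by convert dvd_sub hadd hsub using 1; ring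
    exact (hp.dvd_or_dvd h2y).elim hp2 hy
  · exact .inr (hp.pow_dvd_of_dvd_mul_right n hsub h)

lemma pow_dvd_sub_or_pow_dvd_add_of_pow_dvd_sq_sub_sq' {k n : ℕ} (hp : Prime p) (hp2 : ¬p ∣ 2)
    (hx : p ^ k ∣ x) (hy : p ^ k ∣ y) (hy' : ¬p ^ (k + 1) ∣ y)
    (h : p ^ (2 * k + n) ∣ x ^ 2 - y ^ 2) : p ^ (k + n) ∣ x - y ∨ p ^ (k + n) ∣ x + y := by
  obtain ⟨x, rfl⟩ := hx
  obtain ⟨y, rfl⟩ := hy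
  have hpy : ¬p ∣ y := fun hpy => hy' (pow_succ p k ▸ mul_dvd_mul_left _ hpy)
  have hsq : p ^ n ∣ x ^ 2 - y ^ 2 := by
    rw [← mul_dvd_mul_iff_left (pow_ne_zero (2 * k) hp.ne_zero), ← pow_add]
    convert h using 1; ring
  rw [pow_add, ← mul_sub, ← mul_add]
  exact (pow_dvd_sub_or_pow_dvd_add_of_pow_dvd_sq_sub_sq hp hp2 hpy hsq).imp
    (mul_dvd_mul_left _) (mul_dvd_mul_left _)

end Domain

section PadicVal

variable {p : ℕ} [Fact p.Prime]

lemma ne_zero_of_modEq_of_padicValNat_lt {n x y : ℕ} (h : x ≡ y [MOD p ^ n]) (hy : y ≠ 0)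
    (hyn : padicValNat p y < n) : x ≠ 0 := by
  rintro rfl
  have := (padicValNat_dvd_iff_le hy).mp (Nat.modEq_zero_iff_dvd.mp h.symm)
  omega

lemma padicValNat_eq_of_modEq {n x y : ℕ} (h : x ≡ y [MOD p ^ n]) (hy : y ≠ 0)
    (hyn : padicValNat p y < n) : padicValNat p x = padicValNat p y := by
  have hx := ne_zero_of_modEq_of_padicValNat_lt h hy hyn
  have hdvd_iff {m : ℕ} (hm : m ≤ n) : p ^ m ∣ x ↔ p ^ m ∣ y :=
    h.dvd_iff (pow_dvd_pow p hm)
  refine le_antisymm ?_ ((padicValNat_dvd_iff_le hx).mp ((hdvd_iff hyn.le).mpr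
    pow_padicValNat_dvd))
  by_contra! hlt
  exact pow_succ_padicValNat_not_dvd hy
    ((hdvd_iff hyn).mp ((padicValNat_dvd_iff_le hx).mpr hlt))

lemma pow_sub_half_dvd_of_pow_dvd_sq {n x : ℕ} (h : p ^ n ∣ x ^ 2) : p ^ (n - n / 2) ∣ x := by
  rcases eq_or_ne x 0 with rfl | hx
  · exact dvd_zero _
  rw [padicValNat_dvd_iff_le (pow_ne_zero 2 hx), padicValNat.pow] at h
  rw [padicValNat_dvd_iff_le hx]
  omega

variable {β a : ℕ}

lemma ncard_sq_modEq_le_of_pow_dvd (ha : p ^ β ∣ a) :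
    {x : ℕ | 1 ≤ x ∧ x ≤ p ^ β ∧ x ^ 2 ≡ a [MOD p ^ β]}.ncard ≤ p ^ (β / 2) := by
  have hp : 0 < p := (Fact.out : p.Prime).pos
  calc _ ≤ {x : ℕ | 1 ≤ x ∧ x ≤ p ^ β ∧ (x : ℤ) ≡ 0 [ZMOD (p ^ (β - β / 2) : ℕ)]}.ncard := by
        refine ncard_le_ncard ?_ ((finite_le_nat _).subset fun x hx => hx.2.1)
        rintro x ⟨hx1, hxβ, hxa⟩
        have hsq : p ^ β ∣ x ^ 2 :=
          Nat.modEq_zero_iff_dvd.mp (hxa.trans (Nat.modEq_zero_iff_dvd.mpr ha))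
        exact ⟨hx1, hxβ, Int.modEq_zero_iff_dvd.mpr (mod_cast pow_sub_half_dvd_of_pow_dvd_sq hsq)⟩
    _ ≤ p ^ (β / 2) := ncard_Icc_intModEq_le (pow_pos hp _)
      (by rw [← pow_add, Nat.sub_add_cancel (Nat.div_le_self β 2)]) 0

lemma two_mul_padicValNat_eq_of_sq_modEq {x : ℕ} (ha : a ≠ 0) (hβ : padicValNat p a < β)
    (hx : x ^ 2 ≡ a [MOD p ^ β]) : 2 * padicValNat p x = padicValNat p a := by
  rw [← padicValNat.pow, padicValNat_eq_of_modEq hx ha hβ]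

lemma intModEq_or_intModEq_neg_of_sq_modEq {x x₀ : ℕ} (hp2 : p ≠ 2) (ha : a ≠ 0)
    (hβ : padicValNat p a < β) (hx : x ^ 2 ≡ a [MOD p ^ β]) (hx₀ : x₀ ^ 2 ≡ a [MOD p ^ β]) :
    (x : ℤ) ≡ x₀ [ZMOD (p ^ (β - padicValNat p x₀) : ℕ)] ∨
      (x : ℤ) ≡ -x₀ [ZMOD (p ^ (β - padicValNat p x₀) : ℕ)] := by
  have hp : p.Prime := Fact.out
  have hvx := two_mul_padicValNat_eq_of_sq_modEq ha hβ hx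
  have hvx₀ := two_mul_padicValNat_eq_of_sq_modEq ha hβ hx₀
  set k := padicValNat p x₀
  have hpZ : Prime (p : ℤ) := Nat.prime_iff_prime_int.mp hp
  have hpZ2 : ¬(p : ℤ) ∣ 2 := by
    exact_mod_cast mt (Nat.prime_dvd_prime_iff_eq hp Nat.prime_two).mp hp2
  have hkx : (p : ℤ) ^ k ∣ x := by
    exact_mod_cast (show padicValNat p x = k by omega) ▸ pow_padicValNat_dvd
  have hkx₀ : (p : ℤ) ^ k ∣ x₀ := by exact_mod_cast pow_padicValNat_dvd
  have hkx₀' : ¬(p : ℤ) ^ (k + 1) ∣ x₀ := by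
    exact_mod_cast pow_succ_padicValNat_not_dvd
      ((pow_ne_zero_iff two_ne_zero).mp (ne_zero_of_modEq_of_padicValNat_lt hx₀ ha hβ))
  have hsq : (p : ℤ) ^ (2 * k + (β - 2 * k)) ∣ (x : ℤ) ^ 2 - (x₀ : ℤ) ^ 2 := by
    rw [show 2 * k + (β - 2 * k) = β by omega]
    exact_mod_cast (Int.natCast_modEq_iff.mpr (hx₀.trans hx.symm)).dvd
  rcases pow_dvd_sub_or_pow_dvd_add_of_pow_dvd_sq_sub_sq' hpZ hpZ2 hkx hkx₀ hkx₀' hsq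
    with h | h <;> rw [show k + (β - 2 * k) = β - k by omega] at h
  · exact .inl (Int.modEq_iff_dvd.mpr (mod_cast h)).symm
  · exact .inr (Int.modEq_iff_dvd.mpr (by rw [sub_neg_eq_add]; exact_mod_cast h)).symm

lemma ncard_sq_modEq_le_of_padicValNat_lt (hp2 : p ≠ 2) (ha : a ≠ 0)
    (hβ : padicValNat p a < β) :
    {x : ℕ | 1 ≤ x ∧ x ≤ p ^ β ∧ x ^ 2 ≡ a [MOD p ^ β]}.ncard ≤
      2 * p ^ (padicValNat p a / 2) := by
  set S := {x : ℕ | 1 ≤ x ∧ x ≤ p ^ β ∧ x ^ 2 ≡ a [MOD p ^ β]}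
  rcases S.eq_empty_or_nonempty with hS | ⟨x₀, -, -, hx₀⟩
  · simp [hS]
  have hvx₀ := two_mul_padicValNat_eq_of_sq_modEq ha hβ hx₀
  set k := padicValNat p x₀
  let residues (r : ℤ) : Set ℕ := {x : ℕ | 1 ≤ x ∧ x ≤ p ^ β ∧ (x : ℤ) ≡ r [ZMOD (p ^ (β - k) : ℕ)]}
  have hresidues (r : ℤ) : (residues r).ncard ≤ p ^ k :=
    ncard_Icc_intModEq_le (pow_pos (Fact.out : p.Prime).pos _)
      (by rw [← pow_add, Nat.sub_add_cancel (by omega)]) r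
  have hsub : S ⊆ residues x₀ ∪ residues (-x₀) := fun x ⟨hx1, hxβ, hx⟩ =>
    (intModEq_or_intModEq_neg_of_sq_modEq hp2 ha hβ hx hx₀).imp
      (fun h => ⟨hx1, hxβ, h⟩) (fun h => ⟨hx1, hxβ, h⟩)
  calc S.ncard ≤ (residues x₀ ∪ residues (-x₀)).ncard :=
        ncard_le_ncard hsub ((finite_le_nat _).subset fun x hx => hx.elim (·.2.1) (·.2.1))
    _ ≤ (residues x₀).ncard + (residues (-x₀)).ncard := ncard_union_le _ _
    _ ≤ 2 * p ^ (padicValNat p a / 2) := by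
      rw [show padicValNat p a / 2 = k by omega]
      linarith [hresidues x₀, hresidues (-x₀)]

end PadicVal

lemma pow_div_two_le_rpow {x : ℝ} (hx : 1 ≤ x) (n : ℕ) : x ^ (n / 2) ≤ x ^ ((n : ℝ) / 2) := by
  rw [← Real.rpow_natCast]
  exact Real.rpow_le_rpow_of_exponent_le hx (by exact_mod_cast Nat.cast_div_le)

theorem count_sqrt_mod_prime_pow_general (p : ℕ) (hp : p.Prime) (hodd : Odd p)
    (β : ℕ) (a : ℕ) (ha1 : 1 ≤ a) :
    ({x : ℕ | 1 ≤ x ∧ x ≤ p ^ β ∧ x ^ 2 ≡ a [MOD p ^ β]}.ncard : ℝ)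
      ≤ 2 * (p : ℝ) ^ ((padicValNat p a : ℝ) / 2) := by
  have := Fact.mk hp
  have hcount : {x : ℕ | 1 ≤ x ∧ x ≤ p ^ β ∧ x ^ 2 ≡ a [MOD p ^ β]}.ncard ≤
      2 * p ^ (padicValNat p a / 2) := by
    rcases le_or_gt β (padicValNat p a) with hβ | hβ
    · calc _ ≤ p ^ (β / 2) :=
            ncard_sq_modEq_le_of_pow_dvd ((padicValNat_dvd_iff_le (by omega)).mpr hβ)
        _ ≤ p ^ (padicValNat p a / 2) := Nat.pow_le_pow_right hp.pos (by omega)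
        _ ≤ _ := by omega
    · exact ncard_sq_modEq_le_of_padicValNat_lt (by rintro rfl; exact absurd hodd (by decide))
        (by omega) hβ
  calc _ ≤ 2 * (p : ℝ) ^ (padicValNat p a / 2) := by exact_mod_cast hcount
    _ ≤ _ := by gcongr; exact pow_div_two_le_rpow (by exact_mod_cast hp.one_le) _

/-- For an odd prime `p`, `β ≥ 1`, and `1 ≤ a ≤ p^β`, the number of `x` with
`1 ≤ x ≤ p^β` and `x² ≡ a (mod p^β)` is at most `2·p^{ν_p(a)/2}`. -/
theorem count_sqrt_mod_prime_pow (p : ℕ) (hp : p.Prime) (hodd : Odd p)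
    (β : ℕ) (hβ : 1 ≤ β) (a : ℕ) (ha1 : 1 ≤ a) (ha2 : a ≤ p ^ β) :
    ({x : ℕ | 1 ≤ x ∧ x ≤ p ^ β ∧ x ^ 2 ≡ a [MOD p ^ β]}.ncard : ℝ)
      ≤ 2 * (p : ℝ) ^ ((padicValNat p a : ℝ) / 2) :=
  count_sqrt_mod_prime_pow_general p hp hodd β a ha1
end

section
/- There is an absolute constant C > 0 such that for all real N ≥ 1 and z ≥ 1 and every integer m with 1 ≤ m ≤ N, the number of quadruples (x₁, x₂, x₃, x₄) of positive integers with x₁² ≤ N, x₂² ≤ N, x₃² ≤ N, x₄² ≤ N, satisfying x₁² + x₄² = x₂² + x₃² + m and such that x₁ < z or x₂ < z, is at most C · N^{2/3} · z. -/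
/-!
Put `K = x₂² + m - x₁² = x₄² - x₃²`. The pair `(x₁, x₂)`, one of whose coordinates is below `z`,
can be chosen in `≪ z √N` ways. If `K ≠ 0`, then `(x₃, x₄)` is determined by the divisor
`x₃ + x₄` of `K`, and `|K| ≤ 2N` has `≪ N^{1/6}` divisors. If `K = 0`, then `x₁² = x₂² + m > x₂²`
forces `x₂ < z`, which determines `x₁`, and `x₃ = x₄` leaves at most `√N` choices.
Altogether the count is `≪ z √N · N^{1/6} + z √N ≪ N^{2/3} z`.
-/

open Finset

theorem Nat.succ_pow_le_mul_two_pow {k : ℕ} (hk : 0 < k) (e : ℕ) : (e + 1) ^ k ≤ k ^ k * 2 ^ e :=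
  calc (e + 1) ^ k ≤ (k * 2 ^ (e / k)) ^ k := by
        gcongr
        calc e + 1 ≤ k * (e / k + 1) := Nat.lt_mul_div_succ e hk
          _ ≤ k * 2 ^ (e / k) := Nat.mul_le_mul_left k Nat.lt_two_pow_self
    _ = k ^ k * 2 ^ (k * (e / k)) := by rw [mul_pow, ← pow_mul, mul_comm (e / k)]
    _ ≤ k ^ k * 2 ^ e := Nat.mul_le_mul_left _ (Nat.pow_le_pow_right two_pos (Nat.mul_div_le e k))

theorem Nat.succ_pow_le_pow_of_two_pow_le {k p : ℕ} (hp : 2 ^ k ≤ p) (e : ℕ) :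
    (e + 1) ^ k ≤ p ^ e :=
  calc (e + 1) ^ k ≤ (2 ^ e) ^ k := Nat.pow_le_pow_left Nat.lt_two_pow_self k
    _ = (2 ^ k) ^ e := by rw [← pow_mul, ← pow_mul, mul_comm]
    _ ≤ p ^ e := Nat.pow_le_pow_left hp e

theorem Nat.card_divisors_pow_le {k : ℕ} (hk : 0 < k) (n : ℕ) :
    #n.divisors ^ k ≤ (k ^ 2 ^ k) ^ k * n := by
  rcases eq_or_ne n 0 with rfl | hn
  · simp [hk.ne']
  have hprime_power : ∀ p ∈ n.primeFactors,
      (n.factorization p + 1) ^ k ≤ (if p < 2 ^ k then k ^ k else 1) * p ^ n.factorization p := by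
    intro p hp
    split_ifs with hsmall
    · exact (Nat.succ_pow_le_mul_two_pow hk _).trans
        (Nat.mul_le_mul_left _ (Nat.pow_le_pow_left (Nat.prime_of_mem_primeFactors hp).two_le _))
    · rw [one_mul]; exact Nat.succ_pow_le_pow_of_two_pow_le (not_lt.mp hsmall) _
  have hsmall_primes : ∏ p ∈ n.primeFactors, (if p < 2 ^ k then k ^ k else 1) ≤ (k ^ k) ^ 2 ^ k := by
    rw [← prod_filter, prod_const]
    exact Nat.pow_le_pow_right (by positivity)
      ((card_le_card fun p hp => mem_range.mpr (mem_filter.mp hp).2).trans (card_range _).le)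
  calc #n.divisors ^ k = ∏ p ∈ n.primeFactors, (n.factorization p + 1) ^ k := by
        rw [Nat.card_divisors hn, prod_pow]
    _ ≤ ∏ p ∈ n.primeFactors, (if p < 2 ^ k then k ^ k else 1) * p ^ n.factorization p :=
        prod_le_prod' hprime_power
    _ = (∏ p ∈ n.primeFactors, (if p < 2 ^ k then k ^ k else 1)) * n := by
        rw [prod_mul_distrib, ← Nat.prod_primeFactors_pow_factorization hn]
    _ ≤ (k ^ k) ^ 2 ^ k * n := Nat.mul_le_mul_right n hsmall_primes
    _ = (k ^ 2 ^ k) ^ k * n := by rw [pow_right_comm]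

theorem Nat.card_divisors_le_of_le_pow {k n : ℕ} (hk : 0 < k) {y : ℝ} (hy : 0 ≤ y)
    (hn : (n : ℝ) ≤ y ^ k) : (#n.divisors : ℝ) ≤ k ^ 2 ^ k * y := by
  refine (pow_le_pow_iff_left₀ (by positivity) (by positivity) hk.ne').mp ?_
  calc (#n.divisors : ℝ) ^ k ≤ ((k ^ 2 ^ k) ^ k * n : ℕ) := by
        exact_mod_cast Nat.card_divisors_pow_le hk n
    _ ≤ (k ^ 2 ^ k * y) ^ k := by push_cast; rw [mul_pow]; gcongr

section Quadruples

variable (s Z m : ℕ)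

def quadruples : Finset (ℕ × ℕ × ℕ × ℕ) :=
  (Icc 1 s ×ˢ Icc 1 s ×ˢ Icc 1 s ×ˢ Icc 1 s).filter fun t =>
    t.1 ^ 2 + t.2.2.2 ^ 2 = t.2.1 ^ 2 + t.2.2.1 ^ 2 + m ∧ (t.1 < Z ∨ t.2.1 < Z)

def smallPairs : Finset (ℕ × ℕ) :=
  (Icc 1 s ×ˢ Icc 1 s).filter fun p => p.1 < Z ∨ p.2 < Z

def sqSubSqSolutions (K : ℤ) : Finset (ℕ × ℕ) :=
  (Icc 1 s ×ˢ Icc 1 s).filter fun q => (q.2 : ℤ) ^ 2 - q.1 ^ 2 = K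

theorem card_sqSubSqSolutions_le_card_divisors {K : ℤ} (hK : K ≠ 0) :
    #(sqSubSqSolutions s K) ≤ #K.natAbs.divisors := by
  have hfactor (q : ℕ × ℕ) : (q.2 : ℤ) ^ 2 - q.1 ^ 2 = ((q.1 + q.2 : ℕ) : ℤ) * (q.2 - q.1) := by
    push_cast; ring
  refine card_le_card_of_injOn (fun q => q.1 + q.2) (fun q hq => ?_) fun q hq q' hq' hsum => ?_
  · have hq := (mem_filter.mp hq).2
    rw [hfactor] at hq
    exact Nat.mem_divisors.mpr ⟨Int.natCast_dvd.mp ⟨_, hq.symm⟩, Int.natAbs_ne_zero.mpr hK⟩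
  · have hq := (mem_filter.mp hq).2
    have hq' := (mem_filter.mp hq').2
    have hsum : q.1 + q.2 = q'.1 + q'.2 := hsum
    rw [hfactor, hsum] at hq
    rw [hfactor] at hq'
    have hne : ((q'.1 + q'.2 : ℕ) : ℤ) ≠ 0 := fun h => hK (by rw [← hq', h, zero_mul])
    have hdiff : (q.2 : ℤ) - q.1 = q'.2 - q'.1 := mul_left_cancel₀ hne (hq.trans hq'.symm)
    ext <;> omega

theorem card_sqSubSqSolutions_zero_le : #(sqSubSqSolutions s 0) ≤ s := by
  refine (card_le_card_of_injOn Prod.fst (fun q hq => ?_) fun q hq q' hq' h => ?_).trans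
    (Nat.card_Icc 1 s).le
  · exact (mem_product.mp (mem_filter.mp hq).1).1
  · have hq := (mem_filter.mp hq).2
    have hq' := (mem_filter.mp hq').2
    rw [show q.1 = q'.1 from h, ← hq'] at hq
    have h2 : (q.2 : ℤ) ^ 2 = q'.2 ^ 2 := by linarith
    exact Prod.ext h (by exact_mod_cast (sq_eq_sq₀ (by positivity) (by positivity)).mp h2)

theorem card_smallPairs_le : #(smallPairs s Z) ≤ 2 * Z * s := by
  have hcover : smallPairs s Z ⊆ (range Z ×ˢ Icc 1 s) ∪ (Icc 1 s ×ˢ range Z) := by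
    intro p hp
    simp only [smallPairs, mem_filter, mem_product, mem_Icc, mem_union, mem_range] at hp ⊢
    omega
  calc #(smallPairs s Z) ≤ #(range Z ×ˢ Icc 1 s) + #(Icc 1 s ×ˢ range Z) :=
        (card_le_card hcover).trans (card_union_le _ _)
    _ = 2 * Z * s := by
        rw [card_product, card_product, card_range, Nat.card_Icc, Nat.add_sub_cancel]; ring

theorem card_smallPairs_filter_sq_eq_le (hm : 1 ≤ m) :
    #{p ∈ smallPairs s Z | (p.2 : ℤ) ^ 2 + m - p.1 ^ 2 = 0} ≤ Z := by
  refine (card_le_card_of_injOn Prod.snd (fun p hp => ?_) fun p hp p' hp' h => ?_).trans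
    (card_range Z).le
  · obtain ⟨hp, hsq⟩ := mem_filter.mp hp
    have hlt : p.2 < p.1 := by
      by_contra! hle
      have : (p.1 : ℤ) ^ 2 ≤ p.2 ^ 2 := by gcongr
      omega
    simp only [smallPairs, mem_filter] at hp
    exact mem_range.mpr (by omega)
  · have hsq := (mem_filter.mp hp).2
    have hsq' := (mem_filter.mp hp').2
    rw [show p.2 = p'.2 from h] at hsq
    have h1 : (p.1 : ℤ) ^ 2 = p'.1 ^ 2 := by linarith
    exact Prod.ext (by exact_mod_cast (sq_eq_sq₀ (by positivity) (by positivity)).mp h1) h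

theorem card_quadruples_fiber_le (p : ℕ × ℕ) :
    #{t ∈ quadruples s Z m | (t.1, t.2.1) = p} ≤
      #(sqSubSqSolutions s ((p.2 : ℤ) ^ 2 + m - p.1 ^ 2)) := by
  refine card_le_card_of_injOn (fun t => t.2.2) (fun t ht => ?_) fun t ht t' ht' h => ?_
  · obtain ⟨hq, rfl⟩ := mem_filter.mp ht
    simp only [quadruples, mem_filter, mem_product] at hq
    obtain ⟨⟨-, -, h3, h4⟩, heq, -⟩ := hq
    refine mem_filter.mpr ⟨mem_product.mpr ⟨h3, h4⟩, ?_⟩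
    have heq : (t.1 : ℤ) ^ 2 + t.2.2.2 ^ 2 = t.2.1 ^ 2 + t.2.2.1 ^ 2 + m := by exact_mod_cast heq
    linear_combination heq
  · have hp := (mem_filter.mp ht).2
    rw [← (mem_filter.mp ht').2, Prod.mk.injEq] at hp
    exact Prod.ext hp.1 (Prod.ext hp.2 h)

theorem card_quadruples_le {D : ℕ} (hm : 1 ≤ m)
    (hD : ∀ n ≤ s ^ 2 + m, #n.divisors ≤ D) :
    #(quadruples s Z m) ≤ Z * s + 2 * Z * s * D := by
  set K : ℕ × ℕ → ℤ := fun p => (p.2 : ℤ) ^ 2 + m - p.1 ^ 2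
  have hmaps : Set.MapsTo (fun t : ℕ × ℕ × ℕ × ℕ => (t.1, t.2.1)) (quadruples s Z m)
      (smallPairs s Z) := by
    intro t ht
    simp only [quadruples, smallPairs, coe_filter, mem_product, Set.mem_ofPred_eq] at ht ⊢
    exact ⟨⟨ht.1.1, ht.1.2.1⟩, ht.2.2⟩
  have hfiber : ∀ p ∈ smallPairs s Z, K p ≠ 0 → #(sqSubSqSolutions s (K p)) ≤ D := by
    intro p hp hK
    refine (card_sqSubSqSolutions_le_card_divisors s hK).trans (hD _ ?_)
    simp only [smallPairs, mem_filter, mem_product, mem_Icc] at hp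
    have h1 : (p.1 : ℤ) ^ 2 ≤ s ^ 2 := by gcongr; exact_mod_cast hp.1.1.2
    have h2 : (p.2 : ℤ) ^ 2 ≤ s ^ 2 := by gcongr; exact_mod_cast hp.1.2.2
    have : |K p| ≤ s ^ 2 + m := abs_le.mpr ⟨by simp only [K]; linarith [sq_nonneg (p.2 : ℤ)],
      by simp only [K]; linarith [sq_nonneg (p.1 : ℤ)]⟩
    rw [← Int.natCast_natAbs] at this
    exact_mod_cast this
  calc #(quadruples s Z m)
      = ∑ p ∈ smallPairs s Z, #{t ∈ quadruples s Z m | (t.1, t.2.1) = p} :=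
        card_eq_sum_card_fiberwise hmaps
    _ ≤ ∑ p ∈ smallPairs s Z, #(sqSubSqSolutions s (K p)) :=
        sum_le_sum fun p _ => card_quadruples_fiber_le s Z m p
    _ = ∑ p ∈ smallPairs s Z with K p = 0, #(sqSubSqSolutions s (K p)) +
          ∑ p ∈ smallPairs s Z with K p ≠ 0, #(sqSubSqSolutions s (K p)) :=
        (sum_filter_add_sum_filter_not _ _ _).symm
    _ ≤ ∑ p ∈ smallPairs s Z with K p = 0, s + ∑ p ∈ smallPairs s Z with K p ≠ 0, D := by
        gcongr with p hp p hp
        · rw [(mem_filter.mp hp).2]; exact card_sqSubSqSolutions_zero_le s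
        · exact hfiber p (mem_filter.mp hp).1 (mem_filter.mp hp).2
    _ ≤ Z * s + 2 * Z * s * D := by
        simp only [sum_const, smul_eq_mul]
        gcongr
        · exact card_smallPairs_filter_sq_eq_le s Z m hm
        · exact (card_filter_le _ _).trans (card_smallPairs_le s Z)

theorem card_quadruples_floor_ceil_le {r z : ℝ} (hr : 1 ≤ r) (hz : 1 ≤ z) {m : ℕ} (hm : 1 ≤ m)
    (hmr : (m : ℝ) ≤ r ^ 6) :
    (#(quadruples ⌊r ^ 3⌋₊ ⌈z⌉₊ m) : ℝ) ≤ (2 + 8 * 6 ^ 64) * r ^ 4 * z := by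
  set s := ⌊r ^ 3⌋₊
  set D := ⌊6 ^ 64 * (2 * r)⌋₊
  have hs : (s : ℝ) ≤ r ^ 3 := Nat.floor_le (by positivity)
  have hZ : (⌈z⌉₊ : ℝ) ≤ 2 * z := by linarith [Nat.ceil_lt_add_one (by linarith : 0 ≤ z)]
  have hD : ∀ n ≤ s ^ 2 + m, #n.divisors ≤ D := by
    intro n hn
    refine Nat.le_floor (Nat.card_divisors_le_of_le_pow (by norm_num) (by positivity) ?_)
    have hn : (n : ℝ) ≤ s ^ 2 + m := by exact_mod_cast hn
    nlinarith [pow_le_pow_left₀ zero_le_one hr 6, pow_le_pow_left₀ (Nat.cast_nonneg s) hs 2]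
  calc (#(quadruples s ⌈z⌉₊ m) : ℝ) ≤ ⌈z⌉₊ * s + 2 * ⌈z⌉₊ * s * D := by
        exact_mod_cast card_quadruples_le s ⌈z⌉₊ m hm hD
    _ ≤ 2 * z * r ^ 3 + 2 * (2 * z) * r ^ 3 * (6 ^ 64 * (2 * r)) := by
        gcongr; exact Nat.floor_le (by positivity)
    _ ≤ (2 + 8 * 6 ^ 64) * r ^ 4 * z := by
        nlinarith [pow_le_pow_right₀ hr (by norm_num : 3 ≤ 4), pow_nonneg (zero_le_one.trans hr) 3]

end Quadruples

/-- The number of quadruples `(x₁, x₂, x₃, x₄)` of positive integers with all squares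
at most `N`, `x₁² + x₄² = x₂² + x₃² + m`, and `x₁ < z` or `x₂ < z`, is
`≪ N^{2/3}·z`. -/
theorem count_quadruples_small_coordinate :
    ∃ C : ℝ, 0 < C ∧ ∀ N z : ℝ, 1 ≤ N → 1 ≤ z → ∀ m : ℕ, 1 ≤ m → (m : ℝ) ≤ N →
      ({t : ℕ × ℕ × ℕ × ℕ | 1 ≤ t.1 ∧ 1 ≤ t.2.1 ∧ 1 ≤ t.2.2.1 ∧ 1 ≤ t.2.2.2 ∧
          ((t.1 : ℝ)) ^ 2 ≤ N ∧ ((t.2.1 : ℝ)) ^ 2 ≤ N ∧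
          ((t.2.2.1 : ℝ)) ^ 2 ≤ N ∧ ((t.2.2.2 : ℝ)) ^ 2 ≤ N ∧
          t.1 ^ 2 + t.2.2.2 ^ 2 = t.2.1 ^ 2 + t.2.2.1 ^ 2 + m ∧
          ((t.1 : ℝ) < z ∨ (t.2.1 : ℝ) < z)}.ncard : ℝ)
        ≤ C * N ^ ((2 : ℝ) / 3) * z := by
  refine ⟨2 + 8 * 6 ^ 64, by positivity, fun N z hN hz m hm hmN => ?_⟩
  -- Writing `N = r ^ 6` makes `√N`, `N ^ (1 / 6)` and `N ^ (2 / 3)` powers of `r`.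
  obtain ⟨r, hr, rfl⟩ : ∃ r : ℝ, 1 ≤ r ∧ N = r ^ 6 :=
    ⟨N ^ (6 : ℝ)⁻¹, Real.one_le_rpow hN (by norm_num),
      (Real.rpow_inv_natCast_pow (by positivity) (by norm_num)).symm⟩
  have hsq_le (x : ℕ) : (x : ℝ) ^ 2 ≤ r ^ 6 ↔ x ≤ ⌊r ^ 3⌋₊ := by
    rw [Nat.le_floor_iff (by positivity), show r ^ 6 = (r ^ 3) ^ 2 by ring,
      pow_le_pow_iff_left₀ (by positivity) (by positivity) two_ne_zero]
  calc _ = (#(quadruples ⌊r ^ 3⌋₊ ⌈z⌉₊ m) : ℝ) := by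
        rw [← Set.ncard_coe_finset]; congr 2; ext t
        simp only [Set.mem_ofPred_eq, mem_coe, quadruples, mem_filter, mem_product, mem_Icc,
          hsq_le, Nat.lt_ceil]
        tauto
    _ ≤ (2 + 8 * 6 ^ 64) * r ^ 4 * z := card_quadruples_floor_ceil_le hr hz hm hmN
    _ = (2 + 8 * 6 ^ 64) * (r ^ 6) ^ ((2 : ℝ) / 3) * z := by
        rw [← Real.rpow_natCast r 6, ← Real.rpow_mul (by positivity)]; norm_num
end
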